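/- Let u be a word of length ≥ 2, let u_R be its lexicographically largest proper suffix and u_L the word with u = u_L u_R. Then u is a Lyndon word if and only if u_L and u_R are both Lyndon words and u_L >_lex u_R. -/
import Mathlib


/-- The lexicographic order of the paper: `u <_lex v` iff `v` is a proper prefix of `u`,
or `u = r ++ x :: s`, `v = r ++ y :: t` with letters `x < y`. -/
def PLt {X : Type*} [LinearOrder X] (u v : List X) : Prop :=
  (v <+: u ∧ v ≠ u) ∨
    ∃ (r s t : List X) (x y : X), x < y ∧ u = r ++ x :: s ∧ v = r ++ y :: t

def PLe {X : Type*} [LinearOrder X] (u v : List X) : Prop := PLt u v ∨ u = v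

/-- A nonempty word is Lyndon iff `u >_lex w ++ v` for every factorization `u = v ++ w`
with `v, w` nonempty. -/
def IsLyndon {X : Type*} [LinearOrder X] (u : List X) : Prop :=
  u ≠ [] ∧ ∀ v w : List X, u = v ++ w → v ≠ [] → w ≠ [] → PLt (w ++ v) u

namespace ShirshovAux

variable {X : Type*} [LinearOrder X]

theorem plt_nil_left {v : List X} : ¬ PLt [] v := by
  rintro (⟨h, hne⟩ | ⟨r, s, t, x, y, hxy, h1, h2⟩)
  · exact hne (List.prefix_nil.mp h)
  · simp at h1

theorem plt_to_nil {u : List X} (h : u ≠ []) : PLt u [] :=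
  Or.inl ⟨List.nil_prefix, fun he => h he.symm⟩

theorem cons_iff {x y : X} {s t : List X} :
    PLt (x :: s) (y :: t) ↔ x < y ∨ (x = y ∧ PLt s t) := by
  constructor
  · rintro (⟨h, hne⟩ | ⟨r, s', t', a, b, hab, h1, h2⟩)
    · rcases List.cons_prefix_cons.mp h with ⟨rfl, hpre⟩
      refine Or.inr ⟨rfl, Or.inl ⟨hpre, fun he => hne (by rw [he])⟩⟩
    · cases r with
      | nil =>
        simp only [List.nil_append, List.cons.injEq] at h1 h2
        exact Or.inl (h1.1 ▸ h2.1 ▸ hab)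
      | cons z r' =>
        simp only [List.cons_append, List.cons.injEq] at h1 h2
        exact Or.inr ⟨h1.1.trans h2.1.symm,
          Or.inr ⟨r', s', t', a, b, hab, h1.2, h2.2⟩⟩
  · rintro (hxy | ⟨rfl, hst⟩)
    · exact Or.inr ⟨[], s, t, x, y, hxy, rfl, rfl⟩
    · rcases hst with ⟨h, hne⟩ | ⟨r, s', t', a, b, hab, h1, h2⟩
      · exact Or.inl ⟨List.cons_prefix_cons.mpr ⟨rfl, h⟩,
          fun he => hne (by injection he)⟩
      · exact Or.inr ⟨x :: r, s', t', a, b, hab, by simp [h1], by simp [h2]⟩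

theorem plt_trans : ∀ {a b c : List X}, PLt a b → PLt b c → PLt a c := by
  intro a
  induction a with
  | nil => intro b c h1 _; exact absurd h1 plt_nil_left
  | cons x s ih =>
    intro b c h1 h2
    cases b with
    | nil => exact absurd h2 plt_nil_left
    | cons y t =>
      cases c with
      | nil => exact plt_to_nil (by simp)
      | cons z r =>
        rcases cons_iff.mp h1 with hxy | ⟨rfl, hst⟩ <;>
          rcases cons_iff.mp h2 with hyz | ⟨rfl, htr⟩
        · exact cons_iff.mpr (Or.inl (hxy.trans hyz))
        · exact cons_iff.mpr (Or.inl hxy)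
        · exact cons_iff.mpr (Or.inl hyz)
        · exact cons_iff.mpr (Or.inr ⟨rfl, ih hst htr⟩)

theorem plt_irrefl : ∀ (a : List X), ¬ PLt a a := by
  intro a
  induction a with
  | nil => exact plt_nil_left
  | cons x s ih =>
    intro h
    rcases cons_iff.mp h with hxx | ⟨-, hss⟩
    · exact lt_irrefl x hxx
    · exact ih hss

theorem plt_asymm {a b : List X} (h1 : PLt a b) (h2 : PLt b a) : False :=
  plt_irrefl a (plt_trans h1 h2)

theorem plt_tri : ∀ (a b : List X), PLt a b ∨ a = b ∨ PLt b a := by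
  intro a
  induction a with
  | nil =>
    intro b
    cases b with
    | nil => exact Or.inr (Or.inl rfl)
    | cons y t => exact Or.inr (Or.inr (plt_to_nil (by simp)))
  | cons x s ih =>
    intro b
    cases b with
    | nil => exact Or.inl (plt_to_nil (by simp))
    | cons y t =>
      rcases lt_trichotomy x y with hxy | rfl | hyx
      · exact Or.inl (cons_iff.mpr (Or.inl hxy))
      · rcases ih t with h | rfl | h
        · exact Or.inl (cons_iff.mpr (Or.inr ⟨rfl, h⟩))
        · exact Or.inr (Or.inl rfl)
        · exact Or.inr (Or.inr (cons_iff.mpr (Or.inr ⟨rfl, h⟩)))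
      · exact Or.inr (Or.inr (cons_iff.mpr (Or.inl hyx)))

theorem plt_cancel (c : List X) {a b : List X} : PLt (c ++ a) (c ++ b) ↔ PLt a b := by
  induction c with
  | nil => simp
  | cons z c' ih =>
    simp only [List.cons_append, cons_iff, lt_irrefl, false_or, true_and, ih]

/-- "strict at a letter" comparison -/
def SLt (u v : List X) : Prop :=
  ∃ (r s t : List X) (x y : X), x < y ∧ u = r ++ x :: s ∧ v = r ++ y :: t

theorem SLt.plt {u v : List X} (h : SLt u v) : PLt u v := Or.inr h

theorem SLt.append {a b : List X} (h : SLt a b) (c d : List X) :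
    SLt (a ++ c) (b ++ d) := by
  rcases h with ⟨r, s, t, x, y, hxy, rfl, rfl⟩
  exact ⟨r, s ++ c, t ++ d, x, y, hxy, by simp, by simp⟩

theorem slt_of_plt_of_length {a b : List X} (h : PLt a b) (hl : a.length ≤ b.length) :
    SLt a b := by
  rcases h with ⟨hpre, hne⟩ | hs
  · exact absurd (hpre.eq_of_length (le_antisymm hpre.length_le hl)) hne
  · exact hs

theorem plt_prefix {a c : List X} (hc : c ≠ []) : PLt (a ++ c) a :=
  Or.inl ⟨List.prefix_append a c, by
    intro h
    have := congrArg List.length h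
    simp at this
    exact hc this⟩

theorem plt_append_iff : ∀ {a b : List X} (c d : List X),
    ¬ (a <+: b) → ¬ (b <+: a) → (PLt (a ++ c) (b ++ d) ↔ PLt a b) := by
  intro a
  induction a with
  | nil => intro b c d hab _; exact absurd List.nil_prefix hab
  | cons x a' ih =>
    intro b c d hab hba
    cases b with
    | nil => exact absurd List.nil_prefix hba
    | cons y b' =>
      by_cases hxy : x = y
      · subst hxy
        have h1 : ¬ (a' <+: b') := fun h => hab (List.cons_prefix_cons.mpr ⟨rfl, h⟩)
        have h2 : ¬ (b' <+: a') := fun h => hba (List.cons_prefix_cons.mpr ⟨rfl, h⟩)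
        simp only [List.cons_append, cons_iff, lt_irrefl, false_or, true_and]
        exact ih c d h1 h2
      · simp only [List.cons_append, cons_iff]
        constructor
        · rintro (h | ⟨rfl, -⟩)
          · exact Or.inl h
          · exact absurd rfl hxy
        · rintro (h | ⟨rfl, -⟩)
          · exact Or.inl h
          · exact absurd rfl hxy

/-- Every proper nonempty suffix of a Lyndon word is `PLt` the word. -/
theorem suffix_plt {u v w : List X} (hl : IsLyndon u) (hsplit : u = v ++ w)
    (hv : v ≠ []) (hw : w ≠ []) : PLt w u := by
  have hrot : PLt (w ++ v) u := hl.2 v w hsplit hv hw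
  by_cases hpre : w <+: u
  · -- w is a proper prefix of u : derive a contradiction
    exfalso
    obtain ⟨v', hv'⟩ := hpre
    have hv'ne : v' ≠ [] := by
      rintro rfl
      rw [List.append_nil, hsplit] at hv'
      exact hv (List.self_eq_append_left.mp hv')
    have hrot2 : PLt (v' ++ w) u := hl.2 w v' hv'.symm hw hv'ne
    have hvv' : PLt v v' := by
      have : PLt (w ++ v) (w ++ v') := by rw [hv']; exact hrot
      exact (plt_cancel w).mp this
    have hlen : v.length = v'.length := by
      have h1 := congrArg List.length hv'
      have h2 := congrArg List.length hsplit
      simp at h1 h2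
      omega
    have hslt : SLt v v' := slt_of_plt_of_length hvv' (le_of_eq hlen)
    have : PLt (v ++ w) (v' ++ w) := (hslt.append w w).plt
    rw [← hsplit] at this
    exact plt_asymm this hrot2
  · have huw : ¬ (u <+: w) := by
      intro h
      have h1 := h.length_le
      have h2 := congrArg List.length hsplit
      simp at h2
      have : v.length ≠ 0 := fun hh => hv (List.length_eq_zero_iff.mp hh)
      omega
    have := plt_append_iff v [] hpre huw
    rw [List.append_nil] at this
    exact this.mp hrot

end ShirshovAux

open ShirshovAux in
/-- Shirshov factorization criterion: for a word `u` of length `≥ 2` with `u = uL ++ uR`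
where `uR` is the lexicographically largest (nonempty) proper suffix of `u`,
`u` is Lyndon iff `uL` and `uR` are Lyndon and `uL >_lex uR`. -/
theorem isLyndon_iff_shirshov {X : Type*} [LinearOrder X] (u uL uR : List X)
    (hlen : 2 ≤ u.length) (hsplit : u = uL ++ uR) (hL : uL ≠ []) (hR : uR ≠ [])
    (hmax : ∀ v w : List X, u = v ++ w → v ≠ [] → w ≠ [] → PLe w uR) :
    IsLyndon u ↔ IsLyndon uL ∧ IsLyndon uR ∧ PLt uR uL := by
  have hune : u ≠ [] := by
    intro h; rw [h] at hlen; simp at hlen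
  -- uR is Lyndon, from hmax alone
  have hRlyndon : IsLyndon uR := by
    refine ⟨hR, fun a b hab ha hb => ?_⟩
    have hsuf : PLe b uR := hmax (uL ++ a) b (by rw [hsplit, hab, List.append_assoc])
      (by simp [hL]) hb
    have hblen : b.length < uR.length := by
      have := congrArg List.length hab
      simp at this
      have : a.length ≠ 0 := fun hh => ha (List.length_eq_zero_iff.mp hh)
      omega
    have hbR : PLt b uR := by
      rcases hsuf with h | rfl
      · exact h
      · omega
    have hslt : SLt b uR := slt_of_plt_of_length hbR (le_of_lt hblen)
    have := hslt.append a []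
    rw [List.append_nil] at this
    exact this.plt
  constructor
  · intro hu
    refine ⟨?_, hRlyndon, ?_⟩
    · -- uL is Lyndon
      refine ⟨hL, fun a b hab ha hb => ?_⟩
      have hsuf : PLt (b ++ uR) u :=
        suffix_plt hu (by rw [hsplit, hab, List.append_assoc]) ha (by simp [hR])
      by_cases hpre : b <+: uL
      · exfalso
        obtain ⟨m, hm⟩ := hpre
        have hmne : m ≠ [] := by
          intro h
          subst h
          have h1 := congrArg List.length hm
          have h2 := congrArg List.length hab
          simp at h1 h2
          have : a.length ≠ 0 := fun hh => ha (List.length_eq_zero_iff.mp hh)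
          omega
        have h1 : PLt (b ++ uR) (b ++ (m ++ uR)) := by
          rw [← List.append_assoc, hm, ← hsplit]; exact hsuf
        have h2 : PLt uR (m ++ uR) := (plt_cancel b).mp h1
        have h3 : PLe (m ++ uR) uR := hmax b (m ++ uR)
          (by rw [hsplit, ← hm, List.append_assoc]) hb (by simp [hR])
        rcases h3 with h3 | h3
        · exact plt_irrefl uR (plt_trans h2 h3)
        · rw [h3] at h2; exact plt_irrefl uR h2
      · have hLb : ¬ (uL <+: b) := by
          intro h
          have h1 := h.length_le
          have h2 := congrArg List.length hab
          simp at h2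
          have : a.length ≠ 0 := fun hh => ha (List.length_eq_zero_iff.mp hh)
          omega
        have hiff := plt_append_iff uR uR hpre hLb
        rw [← hsplit] at hiff
        have hbL : PLt b uL := hiff.mp hsuf
        have hblen : b.length ≤ uL.length := by
          have := congrArg List.length hab
          simp at this; omega
        have hslt : SLt b uL := slt_of_plt_of_length hbL hblen
        have := hslt.append a []
        rw [List.append_nil] at this
        exact this.plt
    · -- PLt uR uL
      rcases plt_tri uR uL with h | h | h
      · exact h
      · exfalso
        have := hu.2 uL uR hsplit hL hR
        rw [hsplit, h] at this
        exact plt_irrefl _ this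
      · exfalso
        rcases h with ⟨hpre, hne⟩ | hs
        · -- uR proper prefix of uL, hence of u
          have hpu : uR <+: u := hpre.trans (hsplit ▸ List.prefix_append uL uR)
          obtain ⟨z, hz⟩ := hpu
          have hzne : z ≠ [] := by
            intro hh
            subst hh
            have h1 := congrArg List.length hz
            have h2 := congrArg List.length hsplit
            simp at h1 h2
            have : uL.length ≠ 0 := fun hh => hL (List.length_eq_zero_iff.mp hh)
            omega
          have h1 : PLt u uR := by rw [← hz]; exact plt_prefix hzne
          have h2 : PLt uR u := suffix_plt hu hsplit hL hR
          exact plt_asymm h1 h2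
        · -- letter case : SLt uL uR
          have h1 : PLt (uL ++ uR) (uR ++ uL) := (SLt.append hs uR uL).plt
          have h2 : PLt (uR ++ uL) u := hu.2 uL uR hsplit hL hR
          rw [← hsplit] at h1
          exact plt_asymm h1 h2
  · rintro ⟨hLl, hRl, hRL⟩
    refine ⟨hune, fun v w hvw hv hw => ?_⟩
    -- first : PLt uR u
    have hRu : PLt uR u := by
      rcases hRL with ⟨hpre, hne⟩ | hs
      · obtain ⟨z, hz⟩ := hpre
        have hzne : z ≠ [] := fun hh => hne (by rw [← hz, hh, List.append_nil])
        have h1 : PLt z uR := suffix_plt hRl hz.symm (fun hh => hL hh) hzne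
        have h2 : PLt (uL ++ z) (uL ++ uR) := (plt_cancel uL).mpr h1
        rw [hz, ← hsplit] at h2
        exact h2
      · have := (SLt.append hs [] uR).plt
        rw [List.append_nil, ← hsplit] at this
        exact this
    have hwR : PLe w uR := hmax v w hvw hv hw
    have hwu : PLt w u := by
      rcases hwR with h | rfl
      · exact plt_trans h hRu
      · exact hRu
    have hwlen : w.length ≤ u.length := by
      have := congrArg List.length hvw
      simp at this; omega
    have hslt : SLt w u := slt_of_plt_of_length hwu hwlen
    have := hslt.append v []
    rw [List.append_nil] at this
    exact this.plt
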